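/- arXiv:2211.03052 — 5 statements merged into one kernel-verified Lean document; each statement's English description precedes it below -/
import Mathlib

section
/- For any probability distribution p over a countable alphabet, any n ≥ 1 and any real r ≥ 1, E[M_r(X^n)] = ∑_u p(u)^r(1-p(u))^n ≤ (q*)^{r-1}(1-q*)^n where q* = (r-1)/(r-1+n). In particular E[M_r(X^n)] = O(n^{-(r-1)}). -/
/-!
By linearity of expectation, a symbol `u` is absent from the sample with probability
`(1 - p u) ^ n`, which gives the formula for `E[M_r]`. Then
`p u ^ r (1 - p u) ^ n = p u · p u ^ (r - 1) (1 - p u) ^ n`, where the second factor is at most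
the maximum of `q ^ (r - 1) (1 - q) ^ n` over `[0, 1]`, attained at `q*` (weighted AM–GM), and the
weights `p u` sum to one. Finally `q* ^ (r - 1) ≤ ((r - 1) / n) ^ (r - 1)`.
-/

open MeasureTheory Finset

lemma rpow_div_self_pos {a s : ℝ} (ha : 0 ≤ a) (hs : 0 < s) : 0 < (a / s) ^ a := by
  rcases ha.eq_or_lt with rfl | ha
  · simp
  · exact Real.rpow_pos_of_pos (div_pos ha hs) a

theorem rpow_mul_rpow_le_of_add_le_one {a b x y : ℝ} (ha : 0 ≤ a) (hb : 0 ≤ b)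
    (hab : 0 < a + b) (hx : 0 ≤ x) (hy : 0 ≤ y) (hxy : x + y ≤ 1) :
    x ^ a * y ^ b ≤ (a / (a + b)) ^ a * (b / (a + b)) ^ b := by
  set w₁ := a / (a + b)
  set w₂ := b / (a + b)
  have hw₁ : 0 ≤ w₁ := by positivity
  have hw₂ : 0 ≤ w₂ := by positivity
  have hw : w₁ + w₂ = 1 := by simp only [w₁, w₂]; field_simp
  -- only an inequality, since `w = 0` (i.e. `a = 0` or `b = 0`) is allowed
  have cancel_le : ∀ {w z : ℝ}, 0 ≤ z → w * (z / w) ≤ z := fun hz => by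
    rw [mul_div_left_comm]; exact mul_le_of_le_one_right hz (div_self_le_one _)
  have amgm : (x / w₁) ^ w₁ * (y / w₂) ^ w₂ ≤ 1 :=
    calc _ ≤ w₁ * (x / w₁) + w₂ * (y / w₂) :=
          Real.geom_mean_le_arith_mean2_weighted hw₁ hw₂ (by positivity) (by positivity) hw
      _ ≤ x + y := add_le_add (cancel_le hx) (cancel_le hy)
      _ ≤ 1 := hxy
  have key : (x / w₁) ^ a * (y / w₂) ^ b ≤ 1 := by
    have := Real.rpow_le_one (by positivity) amgm hab.le
    rwa [Real.mul_rpow (by positivity) (by positivity), ← Real.rpow_mul (by positivity),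
      ← Real.rpow_mul (by positivity), div_mul_cancel₀ _ hab.ne',
      div_mul_cancel₀ _ hab.ne'] at this
  rwa [Real.div_rpow hx hw₁, Real.div_rpow hy hw₂, div_mul_div_comm,
    div_le_one (mul_pos (rpow_div_self_pos ha hab) (rpow_div_self_pos hb hab))] at key

theorem rpow_mul_one_sub_pow_le {a q : ℝ} {n : ℕ} (ha : 0 ≤ a) (han : 0 < a + n)
    (hq₀ : 0 ≤ q) (hq₁ : q ≤ 1) :
    q ^ a * (1 - q) ^ n ≤ (a / (a + n)) ^ a * (1 - a / (a + n)) ^ n := by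
  have hcompl : 1 - a / (a + n) = n / (a + n) := by field_simp; ring
  rw [hcompl, ← Real.rpow_natCast, ← Real.rpow_natCast]
  exact rpow_mul_rpow_le_of_add_le_one ha n.cast_nonneg han hq₀ (sub_nonneg.2 hq₁) (by linarith)

theorem tsum_rpow_mul_one_sub_pow_le {X : Type*} {w : X → ℝ} (hw : HasSum w 1)
    (hw₀ : ∀ u, 0 ≤ w u) {r : ℝ} (hr : 1 ≤ r) {n : ℕ} (hrn : 0 < r - 1 + n) :
    ∑' u, w u ^ r * (1 - w u) ^ n
      ≤ ((r - 1) / (r - 1 + n)) ^ (r - 1) * (1 - (r - 1) / (r - 1 + n)) ^ n := by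
  set M := ((r - 1) / (r - 1 + n)) ^ (r - 1) * (1 - (r - 1) / (r - 1 + n)) ^ n
  have hw₁ : ∀ u, w u ≤ 1 := fun u => le_hasSum hw u fun j _ => hw₀ j
  have term_nonneg : ∀ u, 0 ≤ w u ^ r * (1 - w u) ^ n := fun u => by
    have := sub_nonneg.2 (hw₁ u); have := hw₀ u; positivity
  have term_le : ∀ u, w u ^ r * (1 - w u) ^ n ≤ w u * M := fun u => by
    rw [show w u ^ r = w u * w u ^ (r - 1) by
      rw [← Real.rpow_one_add' (hw₀ u) (by linarith), add_sub_cancel], mul_assoc]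
    exact mul_le_mul_of_nonneg_left
      (rpow_mul_one_sub_pow_le (by linarith) hrn (hw₀ u) (hw₁ u)) (hw₀ u)
  have hwM : HasSum (fun u => w u * M) M := by simpa using hw.mul_right M
  exact hasSum_le term_le (hwM.summable.of_nonneg_of_le term_nonneg term_le).hasSum hwM

theorem rpow_mul_one_sub_pow_le_rpow_mul_rpow_neg {a : ℝ} (ha : 0 ≤ a) {n : ℕ} (hn : 0 < n) :
    (a / (a + n)) ^ a * (1 - a / (a + n)) ^ n ≤ a ^ a * (n : ℝ) ^ (-a) := by
  have hn' : (0 : ℝ) < n := by exact_mod_cast hn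
  have hq₀ : 0 ≤ a / (a + n) := by positivity
  have hq₁ : a / (a + n) ≤ 1 := div_le_one_of_le₀ (by linarith) (by positivity)
  calc (a / (a + n)) ^ a * (1 - a / (a + n)) ^ n
      ≤ (a / (a + n)) ^ a := mul_le_of_le_one_right (by positivity)
        (pow_le_one₀ (sub_nonneg.2 hq₁) (by linarith))
    _ ≤ (a / n) ^ a := by gcongr; linarith
    _ = a ^ a * (n : ℝ) ^ (-a) := by
      rw [Real.div_rpow ha hn'.le, Real.rpow_neg hn'.le, div_eq_mul_inv]

theorem measureReal_pi_univ_pi_compl_singleton {X : Type*} [MeasurableSpace X]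
    [MeasurableSingletonClass X] (μ : Measure X) [IsProbabilityMeasure μ] (n : ℕ) (u : X) :
    (Measure.pi fun _ : Fin n => μ).real (Set.univ.pi fun _ => {u}ᶜ)
      = (1 - μ.real {u}) ^ n := by
  simp [measureReal_def, Measure.pi_pi, prob_compl_eq_one_sub (measurableSet_singleton u),
    ENNReal.toReal_sub_of_le prob_le_one ENNReal.one_ne_top]

theorem integral_tsum_ite_card_filter_eq_zero {X : Type*} [MeasurableSpace X]
    [MeasurableSingletonClass X] [Countable X] [DecidableEq X] (μ : Measure X)
    [IsProbabilityMeasure μ] (n : ℕ) {g : X → ℝ} (hg : Summable g) :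
    ∫ x : Fin n → X, (∑' u, if #(univ.filter fun i => x i = u) = 0 then g u else 0)
        ∂(Measure.pi fun _ => μ)
      = ∑' u, g u * (1 - μ.real {u}) ^ n := by
  set A : X → Set (Fin n → X) := fun u => Set.univ.pi fun _ => {u}ᶜ
  have hA : ∀ u, MeasurableSet (A u) := fun u =>
    MeasurableSet.univ_pi fun _ => (measurableSet_singleton u).compl
  have hite : ∀ x u, (if #(univ.filter fun i => x i = u) = 0 then g u else 0)
      = (A u).indicator (fun _ => g u) x := fun x u => by
    simp [A, Set.indicator]
  have hint : ∀ u c, ∫ x, (A u).indicator (fun _ => c) x ∂(Measure.pi fun _ => μ)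
      = c * (1 - μ.real {u}) ^ n := fun u c => by
    rw [integral_indicator_const _ (hA u), measureReal_pi_univ_pi_compl_singleton, smul_eq_mul,
      mul_comm]
  have hunseen₀ : ∀ u, 0 ≤ 1 - μ.real {u} := fun u => sub_nonneg.2 measureReal_le_one
  have hunseen₁ : ∀ u, 1 - μ.real {u} ≤ 1 := fun u => sub_le_self _ measureReal_nonneg
  have hsum : Summable fun u =>
      ∫ x, ‖(A u).indicator (fun _ => g u) x‖ ∂(Measure.pi fun _ => μ) := by
    simp_rw [norm_indicator_eq_indicator_norm, hint]
    refine hg.abs.of_nonneg_of_le (fun u => by have := hunseen₀ u; positivity) fun u => ?_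
    exact mul_le_of_le_one_right (norm_nonneg _) (pow_le_one₀ (hunseen₀ u) (hunseen₁ u))
  simp_rw [hite, ← integral_tsum_of_summable_integral_norm
    (fun u => (integrable_const (g u)).indicator (hA u)) hsum, hint]

theorem PMF.hasSum_toReal {X : Type*} (p : PMF X) : HasSum (fun u => (p u).toReal) 1 := by
  have := ENNReal.hasSum_toReal (f := p) (by simp)
  rwa [← ENNReal.tsum_toReal_eq p.apply_ne_top, p.tsum_coe, ENNReal.toReal_one] at this

theorem PMF.toMeasure_real_singleton {X : Type*} [MeasurableSpace X] [MeasurableSingletonClass X]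
    (p : PMF X) (u : X) : p.toMeasure.real {u} = (p u).toReal := by
  rw [measureReal_def, p.toMeasure_apply_singleton u (measurableSet_singleton u)]

/-- For any probability distribution `p` over a countable alphabet, any
`n ≥ 1` and any real `r ≥ 1`, `E[M_r(X^n)] = ∑_u p(u)^r (1-p(u))^n ≤ (q*)^(r-1)(1-q*)^n`
where `q* = (r-1)/(r-1+n)`. In particular `E[M_r(X^n)] = O(n^{-(r-1)})`: there is a
constant `C` (depending only on `r`) with `E[M_r(X^n)] ≤ C * n^(1-r)` for all `n ≥ 1`. -/
theorem expectation_Mr_le {X : Type*} [MeasurableSpace X] [MeasurableSingletonClass X]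
    [Countable X] [DecidableEq X]
    (p : PMF X) (r : ℝ) (hr : 1 ≤ r) :
    (∀ n : ℕ, 1 ≤ n →
      (∫ x : Fin n → X,
          (∑' u : X,
            if (Finset.univ.filter fun i => x i = u).card = 0 then (p u).toReal ^ r else 0)
        ∂(Measure.pi fun _ : Fin n => p.toMeasure))
      = ∑' u : X, (p u).toReal ^ r * (1 - (p u).toReal) ^ n ∧
      (∑' u : X, (p u).toReal ^ r * (1 - (p u).toReal) ^ n)
        ≤ ((r - 1) / (r - 1 + n)) ^ (r - 1) * (1 - (r - 1) / (r - 1 + n)) ^ n) ∧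
    ∃ C : ℝ, ∀ n : ℕ, 1 ≤ n →
      (∑' u : X, (p u).toReal ^ r * (1 - (p u).toReal) ^ n) ≤ C * (n : ℝ) ^ (1 - r) := by
  have hp₀ : ∀ u, 0 ≤ (p u).toReal := fun _ => ENNReal.toReal_nonneg
  have hrn : ∀ n : ℕ, 1 ≤ n → 0 < r - 1 + n := fun n hn => by
    have : (1 : ℝ) ≤ n := by exact_mod_cast hn
    linarith
  have hp₁ : ∀ u, (p u).toReal ≤ 1 := fun u => le_hasSum p.hasSum_toReal u fun j _ => hp₀ j
  have hsummable : Summable fun u => (p u).toReal ^ r :=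
    p.hasSum_toReal.summable.of_nonneg_of_le (fun u => by have := hp₀ u; positivity)
      fun u => Real.rpow_le_self_of_le_one (hp₀ u) (hp₁ u) hr
  refine ⟨fun n hn => ⟨?_, tsum_rpow_mul_one_sub_pow_le p.hasSum_toReal hp₀ hr (hrn n hn)⟩,
    (r - 1) ^ (r - 1), fun n hn => ?_⟩
  · simp_rw [integral_tsum_ite_card_filter_eq_zero _ n hsummable, p.toMeasure_real_singleton]
  · calc _ ≤ _ := tsum_rpow_mul_one_sub_pow_le p.hasSum_toReal hp₀ hr (hrn n hn)
      _ ≤ (r - 1) ^ (r - 1) * (n : ℝ) ^ (-(r - 1)) :=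
        rpow_mul_one_sub_pow_le_rpow_mul_rpow_neg (by linarith) hn
      _ = (r - 1) ^ (r - 1) * (n : ℝ) ^ (1 - r) := by rw [neg_sub]
end

section
/- Let r ≥ 1, n ≥ 1, and let t_1 < t_2 be as in the concavity decomposition of h(t) = t^r(1-t)^n (so h is strictly concave on (t_1, t_2)). If p* ∈ Δ_k maximizes E(p) = ∑_{u=1}^k h(p(u)) over the probability simplex Δ_k, then any two coordinates of p* lying in [t_1, t_2] are equal. -/
/-- Property 2: Let `r ≥ 1`, `n ≥ 1`, and `t₁ < t₂` with
`h(t) = t^r (1-t)^n` strictly concave on `[t₁, t₂]`. If `p* ∈ Δ_k` maximizes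
`E(p) = ∑_u h(p u)` over the probability simplex `Δ_k`, then any two coordinates of
`p*` lying in `[t₁, t₂]` are equal. -/
theorem maximizer_equal_in_concave_region (k : ℕ) (r : ℝ) (hr : 1 ≤ r)
    (n : ℕ) (hn : 1 ≤ n) (t1 t2 : ℝ) (ht : t1 < t2)
    (hconc : StrictConcaveOn ℝ (Set.Icc t1 t2) (fun t : ℝ => t ^ r * (1 - t) ^ n))
    (p : Fin k → ℝ) (hp0 : ∀ u, 0 ≤ p u) (hp1 : ∑ u, p u = 1)
    (hopt : ∀ q : Fin k → ℝ, (∀ u, 0 ≤ q u) → ∑ u, q u = 1 →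
      ∑ u, q u ^ r * (1 - q u) ^ n ≤ ∑ u, p u ^ r * (1 - p u) ^ n)
    (u v : Fin k) (hu : p u ∈ Set.Icc t1 t2) (hv : p v ∈ Set.Icc t1 t2) :
    p u = p v := by
  by_contra hne
  have huv : u ≠ v := by rintro rfl; exact hne rfl
  set h : ℝ → ℝ := fun t : ℝ => t ^ r * (1 - t) ^ n with hh
  set m : ℝ := (p u + p v) / 2 with hm
  set q : Fin k → ℝ := fun w => if w = u ∨ w = v then m else p w with hq
  have hm0 : 0 ≤ m := by
    have := hp0 u; have := hp0 v; simp only [hm]; linarith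
  have hq0 : ∀ w, 0 ≤ q w := by
    intro w; simp only [hq]; split
    · exact hm0
    · exact hp0 w
  -- sum of q equals sum of p
  have hdiff : ∀ w, w ∉ ({u, v} : Finset (Fin k)) → q w = p w := by
    intro w hw
    simp only [Finset.mem_insert, Finset.mem_singleton, not_or] at hw
    simp [hq, hw.1, hw.2]
  have hsum_eq : ∀ g : ℝ → ℝ, ∑ w, g (q w) - ∑ w, g (p w) = (g m - g (p u)) + (g m - g (p v)) := by
    intro g
    rw [← Finset.sum_sub_distrib]
    rw [← Finset.sum_subset (Finset.subset_univ ({u, v} : Finset (Fin k)))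
      (by intro w _ hw; rw [hdiff w hw]; ring)]
    rw [Finset.sum_pair huv]
    simp [hq, huv]
  have hq1 : ∑ w, q w = 1 := by
    have := hsum_eq id
    simp only [id] at this
    have hmm : m - p u + (m - p v) = 0 := by simp only [hm]; ring
    rw [hp1] at this
    linarith [this, hmm]
  -- strict concavity
  have hkey : (h (p u) + h (p v)) / 2 < h m := by
    have := hconc.2 hu hv hne (by norm_num : (0:ℝ) < 1/2) (by norm_num : (0:ℝ) < 1/2)
      (by norm_num : (1:ℝ)/2 + 1/2 = 1)
    simp only [smul_eq_mul, hh] at this ⊢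
    have hmeq : (1:ℝ)/2 * p u + 1/2 * p v = m := by simp only [hm]; ring
    rw [hmeq] at this
    linarith
  have hle := hopt q hq0 hq1
  have := hsum_eq h
  simp only [hh] at this hle hkey
  linarith
end

section
/- With h(t) = t^r(1-t)^n, r ≥ 1, and t_1 the left inflection point (h strictly convex on [0, t_1)), if p* maximizes ∑_{u=1}^k h(p(u)) over Δ_k, then at most one coordinate of p* lies in the open interval (0, t_1). -/
/-!
If two coordinates `a ≤ b` of a maximizer both lie where `h` is strictly convex, moving a little
mass from the smaller one to the larger one (`a - ε`, `b + ε`) stays in the simplex and, by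
strict convexity, strictly increases `h a + h b`, contradicting maximality.
-/

open Function Filter Topology

theorem StrictConvexOn.map_add_map_lt_of_spread {s : Set ℝ} {f : ℝ → ℝ}
    (hf : StrictConvexOn ℝ s f) {a b ε : ℝ} (hab : a ≤ b) (hε : 0 < ε)
    (ha : a - ε ∈ s) (hb : b + ε ∈ s) : f a + f b < f (a - ε) + f (b + ε) := by
  have hL : 0 < b - a + 2 * ε := by linarith
  set θ := ε / (b - a + 2 * ε)
  have hθL : θ * (b - a + 2 * ε) = ε := div_mul_cancel₀ ε hL.ne'
  have hθ : 0 < θ := div_pos hε hL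
  have hθ' : 0 < 1 - θ := sub_pos.2 ((div_lt_one hL).2 (by linarith))
  -- `a` and `b` are mirror images in the midpoint of `[a - ε, b + ε]`
  have ha' : (1 - θ) • (a - ε) + θ • (b + ε) = a := by
    simp only [smul_eq_mul]; linear_combination hθL
  have hb' : θ • (a - ε) + (1 - θ) • (b + ε) = b := by
    simp only [smul_eq_mul]; linear_combination -hθL
  have h₁ := hf.2 ha hb (by linarith) hθ' hθ (sub_add_cancel 1 θ)
  have h₂ := hf.2 ha hb (by linarith) hθ hθ' (add_sub_cancel θ 1)
  rw [ha'] at h₁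
  rw [hb'] at h₂
  simp only [smul_eq_mul] at h₁ h₂
  linarith

theorem Fintype.sum_comp_update {ι α M : Type*} [Fintype ι] [DecidableEq ι] [AddCommGroup M]
    (g : α → M) (p : ι → α) (i : ι) (x : α) :
    ∑ j, g (update p i x j) = ∑ j, g (p j) - g (p i) + g x := by
  simp_rw [apply_update (fun _ => g), Finset.sum_update_of_mem (Finset.mem_univ i),
    ← Finset.sum_erase_add _ _ (Finset.mem_univ i), Finset.sdiff_singleton_eq_erase]
  abel

theorem StrictConvexOn.eq_of_isMaxOn_sum_stdSimplex {ι : Type*} [Fintype ι] {s : Set ℝ}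
    {f : ℝ → ℝ} (hf : StrictConvexOn ℝ s f) {p : ι → ℝ} (hp : p ∈ stdSimplex ℝ ι)
    (hmax : IsMaxOn (fun q => ∑ i, f (q i)) (stdSimplex ℝ ι) p) {u v : ι}
    (hu : p u ∈ interior s) (hv : p v ∈ interior s) (hu0 : 0 < p u) (hv0 : 0 < p v) :
    u = v := by
  classical
  by_contra huv
  wlog hle : p u ≤ p v generalizing u v
  · exact this hv hu hv0 hu0 (Ne.symm huv) (le_of_not_ge hle)
  have hshift : ∀ᶠ ε in 𝓝[>] 0, ε ≤ p u ∧ p u - ε ∈ s ∧ p v + ε ∈ s := by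
    refine Filter.Eventually.filter_mono nhdsWithin_le_nhds ?_
    refine (eventually_le_nhds hu0).and (Filter.Eventually.and ?_ ?_)
    · exact ((continuous_sub_left (p u)).tendsto' 0 _ (sub_zero _)).eventually
        (mem_interior_iff_mem_nhds.1 hu)
    · exact ((continuous_const_add (p v)).tendsto' 0 _ (add_zero _)).eventually
        (mem_interior_iff_mem_nhds.1 hv)
  obtain ⟨ε, ⟨hεu, hus, hvs⟩, hε⟩ := (hshift.and self_mem_nhdsWithin).exists
  set q := update (update p u (p u - ε)) v (p v + ε)
  have hsum : ∀ g : ℝ → ℝ,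
      ∑ i, g (q i) = ∑ i, g (p i) - g (p u) - g (p v) + g (p u - ε) + g (p v + ε) := by
    intro g
    rw [Fintype.sum_comp_update, Fintype.sum_comp_update, update_of_ne (Ne.symm huv)]
    abel
  have hq : q ∈ stdSimplex ℝ ι := by
    refine ⟨fun i => ?_, ?_⟩
    · simp only [q, update_apply]
      split_ifs <;> linarith [hp.1 i, hp.1 v]
    · have h := hsum id
      simp only [id_eq, hp.2] at h
      linarith
  have hle' := hmax hq
  have hlt := hf.map_add_map_lt_of_spread hle (Set.mem_Ioi.1 hε) hus hvs
  simp only [Set.mem_ofPred_eq, hsum f] at hle'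
  linarith

theorem maximizer_at_most_one_left_general (k : ℕ) (r : ℝ)
    (n : ℕ) (t1 : ℝ)
    (hsconv : StrictConvexOn ℝ (Set.Ico (0 : ℝ) t1) (fun t : ℝ => t ^ r * (1 - t) ^ n))
    (p : Fin k → ℝ) (hp0 : ∀ u, 0 ≤ p u) (hp1 : ∑ u, p u = 1)
    (hopt : ∀ q : Fin k → ℝ, (∀ u, 0 ≤ q u) → ∑ u, q u = 1 →
      ∑ u, q u ^ r * (1 - q u) ^ n ≤ ∑ u, p u ^ r * (1 - p u) ^ n)
    (u v : Fin k) (hu : p u ∈ Set.Ioo 0 t1) (hv : p v ∈ Set.Ioo 0 t1) :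
    u = v :=
  hsconv.eq_of_isMaxOn_sum_stdSimplex ⟨hp0, hp1⟩ (fun q hq => hopt q hq.1 hq.2)
    (by rwa [interior_Ico]) (by rwa [interior_Ico]) hu.1 hv.1

/-- Property 3: With `h(t) = t^r (1-t)^n`, `r ≥ 1`, and `t₁` the left
inflection point (`h` convex on `[0, t₁]` and strictly convex on `[0, t₁)`), if `p*`
maximizes `∑_u h(p u)` over the simplex `Δ_k`, then at most one coordinate of `p*`
lies in the open interval `(0, t₁)`. -/
theorem maximizer_at_most_one_left (k : ℕ) (r : ℝ) (hr : 1 ≤ r)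
    (n : ℕ) (hn : 1 ≤ n) (t1 : ℝ) (ht1 : 0 < t1)
    (hconv : ConvexOn ℝ (Set.Icc (0 : ℝ) t1) (fun t : ℝ => t ^ r * (1 - t) ^ n))
    (hsconv : StrictConvexOn ℝ (Set.Ico (0 : ℝ) t1) (fun t : ℝ => t ^ r * (1 - t) ^ n))
    (p : Fin k → ℝ) (hp0 : ∀ u, 0 ≤ p u) (hp1 : ∑ u, p u = 1)
    (hopt : ∀ q : Fin k → ℝ, (∀ u, 0 ≤ q u) → ∑ u, q u = 1 →
      ∑ u, q u ^ r * (1 - q u) ^ n ≤ ∑ u, p u ^ r * (1 - p u) ^ n)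
    (u v : Fin k) (hu : p u ∈ Set.Ioo 0 t1) (hv : p v ∈ Set.Ioo 0 t1) :
    u = v :=
  maximizer_at_most_one_left_general k r n t1 hsconv p hp0 hp1 hopt u v hu hv
end

section
/- With h(t) = t^r(1-t)^n, r ≥ 1, and t_2 the right inflection point (h strictly convex on (t_2,1]), if p* maximizes ∑_{u=1}^k h(p(u)) over Δ_k, then at most one coordinate of p* lies in (t_2, 1]. -/
/-!
If two coordinates `a ≥ b` of a point of the simplex lie in `(t₂, 1]`, moving a little mass from
`b` to `a` keeps both in `(t₂, 1]` and, by strict convexity, strictly increases `h a + h b`, so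
the point was not a maximizer. This needs `t₂ ≥ 0`, so that the new coordinates are
nonnegative: `h` vanishes at `0` and `1` but not at `1/2`, so it is not convex on any interval
containing `[0, 1]`.
-/

open Finset Set

theorem StrictConvexOn.map_add_map_lt_of_add_eq {s : Set ℝ} {f : ℝ → ℝ}
    (hf : StrictConvexOn ℝ s f) {x y a b : ℝ} (hx : x ∈ s) (hy : y ∈ s)
    (hxa : x < a) (hxb : x < b) (hab : a + b = x + y) : f a + f b < f x + f y := by
  obtain rfl : b = x + y - a := by linarith
  have hxy : x < y := by linarith
  have hyx : 0 < y - x := by linarith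
  set c := (y - a) / (y - x)
  set d := (a - x) / (y - x)
  have hc : 0 < c := div_pos (by linarith) hyx
  have hd : 0 < d := div_pos (by linarith) hyx
  have hcd : c + d = 1 := by simp only [c, d]; field_simp; ring
  have ha := hf.2 hx hy hxy.ne hc hd hcd
  have hb := hf.2 hx hy hxy.ne hd hc (by linarith)
  have ha_eq : c * x + d * y = a := by simp only [c, d]; field_simp; ring
  have hb_eq : d * x + c * y = x + y - a := by simp only [c, d]; field_simp; ring
  simp only [smul_eq_mul, ha_eq, hb_eq] at ha hb
  calc f a + f (x + y - a) < (c * f x + d * f y) + (d * f x + c * f y) := add_lt_add ha hb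
    _ = (c + d) * (f x + f y) := by ring
    _ = f x + f y := by rw [hcd, one_mul]

theorem Fintype.sum_sub_sum_eq_of_eq_of_ne_of_ne {ι M : Type*} [Fintype ι] [AddCommGroup M]
    {f g : ι → M} {u v : ι} (huv : u ≠ v)
    (hfg : ∀ i, i ≠ u → i ≠ v → f i = g i) :
    ∑ i, f i - ∑ i, g i = f u + f v - (g u + g v) := by
  classical
  rw [← sum_sub_distrib, ← Finset.sum_subset (subset_univ {u, v}), sum_pair huv]
  · abel
  · intro i _ hi
    simp only [Finset.mem_insert, Finset.mem_singleton, not_or] at hi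
    rw [hfg i hi.1 hi.2, sub_self]

theorem nonneg_of_convexOn_Ioc_rpow_mul_one_sub_pow {r t : ℝ} {n : ℕ}
    (hr : r ≠ 0) (hn : n ≠ 0)
    (hconv : ConvexOn ℝ (Ioc t 1) (fun x : ℝ => x ^ r * (1 - x) ^ n)) : 0 ≤ t := by
  by_contra! ht
  have hmid := hconv.2 (show (0 : ℝ) ∈ Ioc t 1 from ⟨ht, zero_le_one⟩)
    (show (1 : ℝ) ∈ Ioc t 1 from ⟨by linarith, le_rfl⟩)
    (show (0 : ℝ) ≤ 1 / 2 by norm_num) (show (0 : ℝ) ≤ 1 / 2 by norm_num) (by norm_num)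
  norm_num [Real.zero_rpow hr, zero_pow hn] at hmid
  exact hmid.not_gt (by positivity)

theorem StrictConvexOn.exists_mem_stdSimplex_sum_lt {ι : Type*} [Fintype ι]
    {f : ℝ → ℝ} {t : ℝ} (ht : 0 ≤ t) (hf : StrictConvexOn ℝ (Ioc t 1) f)
    {p : ι → ℝ} (hp : p ∈ stdSimplex ℝ ι) {u v : ι} (huv : u ≠ v)
    (hu : p u ∈ Ioc t 1) (hv : p v ∈ Ioc t 1) :
    ∃ q ∈ stdSimplex ℝ ι, ∑ i, f (p i) < ∑ i, f (q i) := by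
  classical
  wlog hle : p v ≤ p u generalizing u v
  · exact this huv.symm hv hu (le_of_not_ge hle)
  have hpair : p u + p v ≤ 1 :=
    hp.2 ▸ add_le_sum (fun i _ => hp.1 i) (mem_univ u) (mem_univ v) huv
  obtain ⟨δ, hδ, hδu, hδv⟩ : ∃ δ > 0, p u + δ ≤ 1 ∧ t < p v - δ :=
    ⟨min (1 - p u) (p v - t) / 2, half_pos (lt_min (by linarith [hv.1]) (by linarith [hv.1])),
      by linarith [min_le_left (1 - p u) (p v - t), hu.2],
      by linarith [min_le_right (1 - p u) (p v - t), hv.1]⟩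
  set q := Function.update (Function.update p u (p u + δ)) v (p v - δ)
  have hqu : q u = p u + δ := by simp [q, huv]
  have hqv : q v = p v - δ := by simp [q]
  have hq : ∀ i, i ≠ u → i ≠ v → q i = p i := fun i hiu hiv => by simp [q, hiu, hiv]
  refine ⟨q, ⟨fun i => ?_, ?_⟩, ?_⟩
  · by_cases hiu : i = u
    · rw [hiu, hqu]; linarith [hp.1 u]
    by_cases hiv : i = v
    · rw [hiv, hqv]; linarith
    rw [hq i hiu hiv]; exact hp.1 i
  · have hsum := Fintype.sum_sub_sum_eq_of_eq_of_ne_of_ne huv hq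
    rw [hqu, hqv] at hsum
    linarith [hp.2]
  · have hsum := Fintype.sum_sub_sum_eq_of_eq_of_ne_of_ne (f := fun i => f (q i)) huv
      (fun i hiu hiv => congrArg f (hq i hiu hiv))
    have hspread : f (p u) + f (p v) < f (p v - δ) + f (p u + δ) :=
      hf.map_add_map_lt_of_add_eq ⟨hδv, by linarith⟩ ⟨by linarith [hu.1], hδu⟩
        (by linarith) (by linarith) (by ring)
    simp only [hqu, hqv] at hsum
    linarith

theorem maximizer_at_most_one_right_general (k : ℕ) (r : ℝ) (hr : 1 ≤ r)
    (n : ℕ) (hn : 1 ≤ n) (t2 : ℝ)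
    (hsconv : StrictConvexOn ℝ (Set.Ioc t2 (1 : ℝ)) (fun t : ℝ => t ^ r * (1 - t) ^ n))
    (p : Fin k → ℝ) (hp0 : ∀ u, 0 ≤ p u) (hp1 : ∑ u, p u = 1)
    (hopt : ∀ q : Fin k → ℝ, (∀ u, 0 ≤ q u) → ∑ u, q u = 1 →
      ∑ u, q u ^ r * (1 - q u) ^ n ≤ ∑ u, p u ^ r * (1 - p u) ^ n)
    (u v : Fin k) (hu : p u ∈ Set.Ioc t2 1) (hv : p v ∈ Set.Ioc t2 1) :
    u = v := by
  by_contra huv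
  have ht2 : 0 ≤ t2 :=
    nonneg_of_convexOn_Ioc_rpow_mul_one_sub_pow (by positivity) (by omega) hsconv.convexOn
  obtain ⟨q, hq, hlt⟩ := hsconv.exists_mem_stdSimplex_sum_lt ht2 ⟨hp0, hp1⟩ huv hu hv
  exact (hopt q hq.1 hq.2).not_gt hlt

/-- Property 4: With `h(t) = t^r (1-t)^n`, `r ≥ 1`, and `t₂` the right
inflection point (`h` convex on `[t₂, 1]` and strictly convex on `(t₂, 1]`), if `p*`
maximizes `∑_u h(p u)` over the simplex `Δ_k`, then at most one coordinate of `p*`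
lies in `(t₂, 1]`. -/
theorem maximizer_at_most_one_right (k : ℕ) (r : ℝ) (hr : 1 ≤ r)
    (n : ℕ) (hn : 1 ≤ n) (t2 : ℝ) (ht2 : t2 < 1)
    (hconv : ConvexOn ℝ (Set.Icc t2 (1 : ℝ)) (fun t : ℝ => t ^ r * (1 - t) ^ n))
    (hsconv : StrictConvexOn ℝ (Set.Ioc t2 (1 : ℝ)) (fun t : ℝ => t ^ r * (1 - t) ^ n))
    (p : Fin k → ℝ) (hp0 : ∀ u, 0 ≤ p u) (hp1 : ∑ u, p u = 1)
    (hopt : ∀ q : Fin k → ℝ, (∀ u, 0 ≤ q u) → ∑ u, q u = 1 →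
      ∑ u, q u ^ r * (1 - q u) ^ n ≤ ∑ u, p u ^ r * (1 - p u) ^ n)
    (u v : Fin k) (hu : p u ∈ Set.Ioc t2 1) (hv : p v ∈ Set.Ioc t2 1) :
    u = v :=
  maximizer_at_most_one_right_general k r hr n hn t2 hsconv p hp0 hp1 hopt u v hu hv
end

section
/- Let p* maximize ∑_{u=1}^k p(u)^r(1−p(u))^n over Δ_k for r ≥ 1, n ≥ 1. Combining the structure results: p* has at most a single coordinate in (0, t_1), at most a single coordinate in (t_2, 1], and all coordinates in [t_1, t_2] are equal; hence the maximization of E_{r,n} over Δ_k reduces to an optimization over at most four scalar parameters (the two exceptional coordinate values, the common value in [t_1,t_2], and the number of coordinates taking that common value), independently of k. -/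
/-!
Every pair of coordinates of a maximizer `p` is optimal on its own: replacing `(p u, p v)` by
any `(a, b)` with `a, b ≥ 0` and `a + b = p u + p v` cannot increase the objective. Where `h` is
strictly concave, two distinct values `x, y` lose to the pair `((x+y)/2, (x+y)/2)`; where `h`
is strictly convex, two interior values `x, y` lose to one of `(x + ε, y - ε)`, `(x - ε, y + ε)`,
whose combined gain is `h (x - ε) + h (x + ε) - 2 h x + h (y - ε) + h (y + ε) - 2 h y > 0`.
-/

open Set Filter Topology

theorem StrictConvexOn.two_mul_lt_add {s : Set ℝ} {f : ℝ → ℝ} (hf : StrictConvexOn ℝ s f)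
    {x y : ℝ} (hx : x ∈ s) (hy : y ∈ s) (hxy : x ≠ y) :
    2 * f ((x + y) / 2) < f x + f y := by
  have h := hf.2 hx hy hxy (by norm_num : (0 : ℝ) < 1 / 2) (by norm_num : (0 : ℝ) < 1 / 2)
    (by norm_num)
  rw [smul_eq_mul, smul_eq_mul, smul_eq_mul, smul_eq_mul,
    show 1 / 2 * x + 1 / 2 * y = (x + y) / 2 by ring] at h
  linarith

theorem StrictConcaveOn.add_lt_two_mul {s : Set ℝ} {f : ℝ → ℝ} (hf : StrictConcaveOn ℝ s f)
    {x y : ℝ} (hx : x ∈ s) (hy : y ∈ s) (hxy : x ≠ y) :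
    f x + f y < 2 * f ((x + y) / 2) := by
  have := hf.neg.two_mul_lt_add hx hy hxy
  simp only [Pi.neg_apply] at this
  linarith

theorem Fintype.sum_sub_sum_eq_of_eq_off_pair {ι M : Type*} [Fintype ι] [AddCommGroup M]
    {F G : ι → M} {u v : ι} (huv : u ≠ v) (h : ∀ w, w ≠ u → w ≠ v → F w = G w) :
    ∑ w, F w - ∑ w, G w = (F u - G u) + (F v - G v) := by
  rw [← Finset.sum_sub_distrib]
  exact Fintype.sum_eq_add u v huv fun w hw => by rw [h w hw.1 hw.2, sub_self]

theorem add_le_one_of_mem_stdSimplex {ι : Type*} [Fintype ι] {p : ι → ℝ}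
    (hp : p ∈ stdSimplex ℝ ι) {u v : ι} (huv : u ≠ v) : p u + p v ≤ 1 := by
  classical
  rw [← Finset.sum_pair huv, ← hp.2]
  exact Finset.sum_le_univ_sum_of_nonneg hp.1

theorem eventually_sub_add_mem_of_mem_interior {s : Set ℝ} {x : ℝ} (hx : x ∈ interior s)
    (hx0 : 0 < x) : ∀ᶠ ε in 𝓝 (0 : ℝ), x - ε ∈ s ∧ x + ε ∈ s ∧ 0 ≤ x - ε := by
  have hsub : Tendsto (fun ε => x - ε) (𝓝 0) (𝓝 x) := by
    simpa using (tendsto_const_nhds (x := x)).sub (tendsto_id (x := 𝓝 (0 : ℝ)))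
  have hadd : Tendsto (fun ε => x + ε) (𝓝 0) (𝓝 x) := by
    simpa using (tendsto_const_nhds (x := x)).add (tendsto_id (x := 𝓝 (0 : ℝ)))
  have hs := mem_interior_iff_mem_nhds.1 hx
  filter_upwards [hsub hs, hadd hs, hsub (Ici_mem_nhds hx0)] with ε h₁ h₂ h₃
  exact ⟨h₁, h₂, h₃⟩

namespace IsMaxOn

variable {ι : Type*} [Fintype ι] {f : ℝ → ℝ} {p : ι → ℝ}

theorem add_le_of_add_eq (hmax : IsMaxOn (fun q => ∑ i, f (q i)) (stdSimplex ℝ ι) p)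
    (hp : p ∈ stdSimplex ℝ ι) {u v : ι} (huv : u ≠ v) {a b : ℝ} (ha : 0 ≤ a) (hb : 0 ≤ b)
    (hab : a + b = p u + p v) : f a + f b ≤ f (p u) + f (p v) := by
  classical
  set q := Function.update (Function.update p u a) v b
  have hqu : q u = a := by
    simp only [q, Function.update_of_ne huv, Function.update_self]
  have hqv : q v = b := Function.update_self _ _ _
  have hq_off : ∀ w, w ≠ u → w ≠ v → q w = p w := fun w hwu hwv => by
    simp only [q, Function.update_of_ne hwv, Function.update_of_ne hwu]
  have hq : q ∈ stdSimplex ℝ ι := by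
    refine ⟨fun w => ?_, ?_⟩
    · by_cases hwv : w = v
      · rw [hwv, hqv]; exact hb
      by_cases hwu : w = u
      · rw [hwu, hqu]; exact ha
      rw [hq_off w hwu hwv]; exact hp.1 w
    · have := Fintype.sum_sub_sum_eq_of_eq_off_pair huv hq_off
      rw [hqu, hqv, hp.2] at this
      linarith
  have hdiff := Fintype.sum_sub_sum_eq_of_eq_off_pair (F := fun w => f (q w))
    (G := fun w => f (p w)) huv fun w hwu hwv => by rw [hq_off w hwu hwv]
  have hle : ∑ w, f (q w) ≤ ∑ w, f (p w) := hmax hq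
  simp only [hqu, hqv] at hdiff
  linarith

theorem eq_of_strictConcaveOn (hmax : IsMaxOn (fun q => ∑ i, f (q i)) (stdSimplex ℝ ι) p)
    (hp : p ∈ stdSimplex ℝ ι) {s : Set ℝ} (hf : StrictConcaveOn ℝ s f) {u v : ι}
    (hu : p u ∈ s) (hv : p v ∈ s) : p u = p v := by
  by_contra hne
  have huv : u ≠ v := fun h => hne (congrArg p h)
  have hm : 0 ≤ (p u + p v) / 2 := by linarith [hp.1 u, hp.1 v]
  have := hmax.add_le_of_add_eq hp huv hm hm (by ring)
  linarith [hf.add_lt_two_mul hu hv hne]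

theorem eq_of_strictConvexOn (hmax : IsMaxOn (fun q => ∑ i, f (q i)) (stdSimplex ℝ ι) p)
    (hp : p ∈ stdSimplex ℝ ι) {s : Set ℝ} (hf : StrictConvexOn ℝ s f) {u v : ι}
    (hu : p u ∈ interior s) (hv : p v ∈ interior s) (hu0 : 0 < p u) (hv0 : 0 < p v) :
    u = v := by
  by_contra huv
  have hpos : ∀ᶠ ε in 𝓝[>] (0 : ℝ), 0 < ε := self_mem_nhdsWithin
  obtain ⟨ε, ⟨⟨hu₁, hu₂, hu₃⟩, hv₁, hv₂, hv₃⟩, hε⟩ :=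
    ((((eventually_sub_add_mem_of_mem_interior hu hu0).and
      (eventually_sub_add_mem_of_mem_interior hv hv0)).filter_mono nhdsWithin_le_nhds).and
      hpos).exists
  have hgain : ∀ x, x - ε ∈ s → x + ε ∈ s → 2 * f x < f (x - ε) + f (x + ε) := fun x h₁ h₂ => by
    have := hf.two_mul_lt_add h₁ h₂ (by linarith)
    rwa [show (x - ε + (x + ε)) / 2 = x by ring] at this
  have E₁ := hmax.add_le_of_add_eq hp huv (by linarith) hv₃ (by ring : p u + ε + (p v - ε) = _)
  have E₂ := hmax.add_le_of_add_eq hp huv hu₃ (by linarith) (by ring : p u - ε + (p v + ε) = _)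
  linarith [hgain _ hu₁ hu₂, hgain _ hv₁ hv₂]

end IsMaxOn

theorem exists_forall_eq_of_forall_eq {ι α : Type*} [Nonempty α] {p : ι → α} {A : Set α}
    (h : ∀ u v, p u ∈ A → p v ∈ A → p u = p v) : ∃ a, ∀ u, p u ∈ A → p u = a := by
  by_cases hA : ∃ w, p w ∈ A
  · obtain ⟨w, hw⟩ := hA
    exact ⟨p w, fun u hu => h u w hu hw⟩
  · exact ⟨Classical.arbitrary α, fun u hu => absurd ⟨u, hu⟩ hA⟩

theorem maximizer_four_parameters_general (k : ℕ) (r : ℝ) (n : ℕ)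
    (t1 t2 : ℝ) (h01 : 0 ≤ t1) (h12 : t1 < t2)
    (hconc : StrictConcaveOn ℝ (Set.Icc t1 t2) (fun t : ℝ => t ^ r * (1 - t) ^ n))
    (hsconvL : StrictConvexOn ℝ (Set.Ico (0 : ℝ) t1) (fun t : ℝ => t ^ r * (1 - t) ^ n))
    (hsconvR : StrictConvexOn ℝ (Set.Ioc t2 (1 : ℝ)) (fun t : ℝ => t ^ r * (1 - t) ^ n))
    (p : Fin k → ℝ) (hp0 : ∀ u, 0 ≤ p u) (hp1 : ∑ u, p u = 1)
    (hopt : ∀ q : Fin k → ℝ, (∀ u, 0 ≤ q u) → ∑ u, q u = 1 →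
      ∑ u, q u ^ r * (1 - q u) ^ n ≤ ∑ u, p u ^ r * (1 - p u) ^ n) :
    (∀ u v : Fin k, p u ∈ Set.Ioo 0 t1 → p v ∈ Set.Ioo 0 t1 → u = v) ∧
    (∀ u v : Fin k, p u ∈ Set.Ioc t2 1 → p v ∈ Set.Ioc t2 1 → u = v) ∧
    (∀ u v : Fin k, p u ∈ Set.Icc t1 t2 → p v ∈ Set.Icc t1 t2 → p u = p v) ∧
    ∃ a b c : ℝ, ∀ u : Fin k, p u = 0 ∨ p u = a ∨ p u = b ∨ p u = c := by
  have hp : p ∈ stdSimplex ℝ (Fin k) := ⟨hp0, hp1⟩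
  have hmax : IsMaxOn (fun q => ∑ u, (fun t : ℝ => t ^ r * (1 - t) ^ n) (q u))
      (stdSimplex ℝ (Fin k)) p := fun q hq => hopt q hq.1 hq.2
  have left : ∀ u v, p u ∈ Ioo 0 t1 → p v ∈ Ioo 0 t1 → u = v := fun u v hu hv =>
    hmax.eq_of_strictConvexOn hp hsconvL (by rwa [interior_Ico]) (by rwa [interior_Ico]) hu.1 hv.1
  have right : ∀ u v, p u ∈ Ioc t2 1 → p v ∈ Ioc t2 1 → u = v := fun u v hu hv => by
    by_contra huv
    have hu0 : 0 < p u := by linarith [hu.1]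
    have hv0 : 0 < p v := by linarith [hv.1]
    have hsum := add_le_one_of_mem_stdSimplex hp huv
    exact huv <| hmax.eq_of_strictConvexOn hp hsconvR
      (by rw [interior_Ioc]; constructor <;> linarith [hu.1])
      (by rw [interior_Ioc]; constructor <;> linarith [hv.1]) hu0 hv0
  have middle : ∀ u v, p u ∈ Icc t1 t2 → p v ∈ Icc t1 t2 → p u = p v := fun u v hu hv =>
    hmax.eq_of_strictConcaveOn hp hconc hu hv
  obtain ⟨a, ha⟩ := exists_forall_eq_of_forall_eq fun u v hu hv => congrArg p (left u v hu hv)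
  obtain ⟨b, hb⟩ := exists_forall_eq_of_forall_eq fun u v hu hv => congrArg p (right u v hu hv)
  obtain ⟨c, hc⟩ := exists_forall_eq_of_forall_eq middle
  refine ⟨left, right, middle, a, b, c, fun u => ?_⟩
  have hu1 := (mem_Icc_of_mem_stdSimplex hp u).2
  rcases (hp0 u).eq_or_lt with h0 | h0
  · exact Or.inl h0.symm
  rcases lt_or_ge (p u) t1 with h1 | h1
  · exact Or.inr (Or.inl (ha u ⟨h0, h1⟩))
  rcases le_or_gt (p u) t2 with h2 | h2
  · exact Or.inr (Or.inr (Or.inr (hc u ⟨h1, h2⟩)))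
  · exact Or.inr (Or.inr (Or.inl (hb u ⟨h2, hu1⟩)))

/-- Theorem 2: Let `p*` maximize `∑_u p(u)^r (1-p(u))^n` over `Δ_k` for
`r ≥ 1`, `n ≥ 1`, with `h(t) = t^r (1-t)^n` strictly concave on `[t₁, t₂]` and strictly
convex on `[0, t₁)` and `(t₂, 1]`. Then: at most one coordinate of `p*` lies in
`(0, t₁)`, at most one lies in `(t₂, 1]`, and all coordinates in `[t₁, t₂]` are equal;
hence all coordinates of `p*` take at most four values `0, a, b, c` — the maximization
over `Δ_k` reduces to finitely many scalar parameters, independently of `k`. -/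
theorem maximizer_four_parameters (k : ℕ) (r : ℝ) (hr : 1 ≤ r) (n : ℕ) (hn : 1 ≤ n)
    (t1 t2 : ℝ) (h01 : 0 ≤ t1) (h12 : t1 < t2) (h21 : t2 ≤ 1)
    (hconc : StrictConcaveOn ℝ (Set.Icc t1 t2) (fun t : ℝ => t ^ r * (1 - t) ^ n))
    (hconvL : ConvexOn ℝ (Set.Icc (0 : ℝ) t1) (fun t : ℝ => t ^ r * (1 - t) ^ n))
    (hsconvL : StrictConvexOn ℝ (Set.Ico (0 : ℝ) t1) (fun t : ℝ => t ^ r * (1 - t) ^ n))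
    (hconvR : ConvexOn ℝ (Set.Icc t2 (1 : ℝ)) (fun t : ℝ => t ^ r * (1 - t) ^ n))
    (hsconvR : StrictConvexOn ℝ (Set.Ioc t2 (1 : ℝ)) (fun t : ℝ => t ^ r * (1 - t) ^ n))
    (p : Fin k → ℝ) (hp0 : ∀ u, 0 ≤ p u) (hp1 : ∑ u, p u = 1)
    (hopt : ∀ q : Fin k → ℝ, (∀ u, 0 ≤ q u) → ∑ u, q u = 1 →
      ∑ u, q u ^ r * (1 - q u) ^ n ≤ ∑ u, p u ^ r * (1 - p u) ^ n) :
    (∀ u v : Fin k, p u ∈ Set.Ioo 0 t1 → p v ∈ Set.Ioo 0 t1 → u = v) ∧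
    (∀ u v : Fin k, p u ∈ Set.Ioc t2 1 → p v ∈ Set.Ioc t2 1 → u = v) ∧
    (∀ u v : Fin k, p u ∈ Set.Icc t1 t2 → p v ∈ Set.Icc t1 t2 → p u = p v) ∧
    ∃ a b c : ℝ, ∀ u : Fin k, p u = 0 ∨ p u = a ∨ p u = b ∨ p u = c :=
  maximizer_four_parameters_general k r n t1 t2 h01 h12 hconc hsconvL hsconvR p hp0 hp1 hopt
end
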